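/- Let $m \geq 2$, let $\mathcal{C} \subseteq \mathbb{R}_{\geq 0}^m$ be a convex, permutation-symmetric subset of $\overline{\mathcal{N}}$, and let $x \in \mathcal{C}$ with $x_1 \geq \cdots \geq x_m$. Suppose $y \in \mathbb{R}_{\geq 0}^m$ with $y_1 \geq \cdots \geq y_m$ is weakly majorized by $x$, lies in the boundary set $\partial\mathcal{N}$ (i.e. $\max_{i<j} y_i y_j = 1$ or $\prod_i (1-y_i) + \sum_i (1-y_1)\cdots y_i \cdots (1-y_m) = 0$), and $y_1 > 1$. Then $\sum_{i=1}^m y_i = \sum_{i=1}^m x_i$. -/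

import Mathlib

/-!
If `1 < a i₀` and `a ∈ 𝒩̄`, then every other coordinate is `< 1` and `∏ (1 - a i) < 0`; dividing
the defining polynomial by this product turns the condition into `1 + ∑ a i / (1 - a i) ≤ 0`. On
the boundary this is an equality (if `a i₀ * a p = 1`, the terms of `i₀` and `p` cancel the `1`).
Each summand is strictly increasing on either side of `1`.

If `∑ y < ∑ x`, move mass from a coordinate where `x` exceeds `y` to the first coordinate where
`y` exceeds `x`. Such a transfer is a point on the segment from `x` to a transposition of `x`, so it
stays in `C`; it keeps the prefix sums above those of `y` and makes `x` agree with `y` at one more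
coordinate. Iterating gives `z ∈ C` with `y < z`, and then
`0 = 1 + ∑ y i / (1 - y i) < 1 + ∑ z i / (1 - z i) ≤ 0`.
-/

open Finset

/-- The region `𝒩̄`. -/
def Nbar (m : ℕ) : Set (Fin m → ℝ) :=
  {a | (∀ i, 0 ≤ a i) ∧ (∀ i j, i ≠ j → a i * a j ≤ 1) ∧
    0 ≤ ∏ i, (1 - a i) + ∑ i, a i * ∏ j ∈ univ.erase i, (1 - a j)}

section Odds

variable {ι : Type*} [Fintype ι] {a b : ι → ℝ}

def atMostOnePoly [DecidableEq ι] (a : ι → ℝ) : ℝ :=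
  ∏ i, (1 - a i) + ∑ i, a i * ∏ j ∈ univ.erase i, (1 - a j)

noncomputable def oddsSum (a : ι → ℝ) : ℝ :=
  1 + ∑ i, a i / (1 - a i)

theorem atMostOnePoly_eq_prod_mul_oddsSum [DecidableEq ι] (ha : ∀ i, a i ≠ 1) :
    atMostOnePoly a = (∏ i, (1 - a i)) * oddsSum a := by
  rw [atMostOnePoly, oddsSum, mul_add, mul_one, mul_sum]
  congr 1
  refine sum_congr rfl fun i _ => ?_
  have hi : 1 - a i ≠ 0 := sub_ne_zero.mpr (ha i).symm
  rw [← mul_prod_erase univ (fun j => 1 - a j) (mem_univ i)]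
  field_simp

theorem prod_one_sub_neg [DecidableEq ι] {i₀ : ι} (h₀ : 1 < a i₀) (h : ∀ i ≠ i₀, a i < 1) :
    ∏ i, (1 - a i) < 0 := by
  rw [← mul_prod_erase univ (fun j => 1 - a j) (mem_univ i₀)]
  refine mul_neg_of_neg_of_pos (by linarith) (prod_pos fun i hi => ?_)
  linarith [h i (ne_of_mem_erase hi)]

theorem div_one_sub_lt_div_one_sub {s t : ℝ} (hst : s < t) (h : t < 1 ∨ 1 < s) :
    s / (1 - s) < t / (1 - t) := by
  have hpos : 0 < (1 - s) * (1 - t) := by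
    rcases h with h | h
    · exact mul_pos (by linarith) (by linarith)
    · exact mul_pos_of_neg_of_neg (by linarith) (by linarith)
  have hs : 1 - s ≠ 0 := by intro h0; simp [h0] at hpos
  have ht : 1 - t ≠ 0 := by intro h0; simp [h0] at hpos
  have key : t / (1 - t) - s / (1 - s) = (t - s) / ((1 - s) * (1 - t)) := by
    field_simp; ring
  linarith [div_pos (sub_pos.mpr hst) hpos]

theorem oddsSum_lt_oddsSum (hab : a < b) (h : ∀ i, b i < 1 ∨ 1 < a i) :
    oddsSum a < oddsSum b := by
  obtain ⟨hle, i, hi⟩ := Pi.lt_def.mp hab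
  have hterm : ∀ i, a i < b i → a i / (1 - a i) < b i / (1 - b i) := fun i hi =>
    div_one_sub_lt_div_one_sub hi (h i)
  refine add_lt_add_right (sum_lt_sum (fun j _ => ?_) ⟨i, mem_univ i, hterm i hi⟩) 1
  rcases (hle j).lt_or_eq with hj | hj
  · exact (hterm j hj).le
  · rw [hj]

theorem oddsSum_nonneg_of_mul_eq_one [DecidableEq ι] (ha : ∀ i, 0 ≤ a i) {p q : ι} (hpq : p ≠ q)
    (hmul : a p * a q = 1) (h : ∀ i ≠ q, a i < 1) : 0 ≤ oddsSum a := by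
  have hp := h p hpq
  have hq : 1 < a q := by nlinarith [ha p]
  have hrest : a p / (1 - a p) ≤ ∑ i ∈ univ.erase q, a i / (1 - a i) :=
    single_le_sum (f := fun i => a i / (1 - a i))
      (fun i hi => div_nonneg (ha i) (by linarith [h i (ne_of_mem_erase hi)]))
      (mem_erase.mpr ⟨hpq, mem_univ p⟩)
  have hpair : 1 + a q / (1 - a q) + a p / (1 - a p) = 0 := by
    have : 1 - a q ≠ 0 := by linarith
    have : 1 - a p ≠ 0 := by linarith
    field_simp
    linear_combination -hmul
  rw [oddsSum, ← add_sum_erase univ _ (mem_univ q)]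
  linarith

end Odds

section Transfer

variable {ι : Type*} [DecidableEq ι]

def transfer (x : ι → ℝ) (j k : ι) (δ : ℝ) : ι → ℝ :=
  x - Pi.single j δ + Pi.single k δ

@[simp]
theorem transfer_apply (x : ι → ℝ) (j k : ι) (δ : ℝ) (i : ι) :
    transfer x j k δ i = x i - (if i = j then δ else 0) + (if i = k then δ else 0) := by
  simp [transfer, Pi.single_apply]

theorem sum_transfer (x : ι → ℝ) (j k : ι) (δ : ℝ) (s : Finset ι) :
    ∑ i ∈ s, transfer x j k δ i =
      ∑ i ∈ s, x i - (if j ∈ s then δ else 0) + (if k ∈ s then δ else 0) := by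
  simp only [transfer, Pi.add_apply, Pi.sub_apply, sum_add_distrib, sum_sub_distrib,
    sum_pi_single']

theorem Convex.transfer_mem {C : Set (ι → ℝ)} (hconv : Convex ℝ C)
    (hsym : ∀ a ∈ C, ∀ σ : Equiv.Perm ι, a ∘ σ ∈ C) {x : ι → ℝ} (hx : x ∈ C)
    {j k : ι} {δ : ℝ} (hδ : 0 ≤ δ) (hδjk : δ ≤ x j - x k) : transfer x j k δ ∈ C := by
  rcases hδ.eq_or_lt with rfl | hδ
  · simpa [transfer] using hx
  have hjk : j ≠ k := by rintro rfl; linarith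
  have hd : x j - x k ≠ 0 := by linarith
  set t := δ / (x j - x k)
  have hseg : transfer x j k δ = (1 - t) • x + t • (x ∘ Equiv.swap j k) := by
    funext i
    by_cases hij : i = j
    · subst hij; simp [hjk, t]; field_simp; ring
    by_cases hik : i = k
    · subst hik; simp [hij, t]; field_simp; ring
    simp [hij, hik, Equiv.swap_apply_of_ne_of_ne]; ring
  rw [hseg]
  exact hconv hx (hsym x hx _) (by rw [sub_nonneg, div_le_one (by linarith)]; linarith)
    (div_nonneg hδ.le (by linarith)) (by ring)

theorem card_filter_ne_lt [Fintype ι] {x x' y : ι → ℝ} {j k : ι} (hj : x j ≠ y j)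
    (hk : x k ≠ y k) (hx' : ∀ i, i ≠ j → i ≠ k → x' i = x i) (h : x' j = y j ∨ x' k = y k) :
    #{i | x' i ≠ y i} < #{i | x i ≠ y i} := by
  have hsub : ({i | x' i ≠ y i} : Finset ι) ⊆ ({i | x i ≠ y i} : Finset ι) := by
    intro i
    simp only [mem_filter, mem_univ, true_and]
    intro hi
    by_cases hij : i = j
    · exact hij ▸ hj
    by_cases hik : i = k
    · exact hik ▸ hk
    rwa [← hx' i hij hik]
  refine card_lt_card ((ssubset_iff_of_subset hsub).mpr ?_)
  rcases h with h | h
  · exact ⟨j, by simpa using hj, by simpa using h⟩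
  · exact ⟨k, by simpa using hk, by simpa using h⟩

end Transfer

section Majorization

variable {m : ℕ} {C : Set (Fin m → ℝ)} {x y : Fin m → ℝ}

def PrefixSumsLE (y x : Fin m → ℝ) : Prop :=
  ∀ l ≤ m, ∑ i ∈ univ.filter (fun i : Fin m => (i : ℕ) < l), y i ≤
    ∑ i ∈ univ.filter (fun i : Fin m => (i : ℕ) < l), x i

theorem Fin.filter_val_lt_succ (k : Fin m) :
    (univ.filter fun i : Fin m => (i : ℕ) < (k : ℕ) + 1) =
      insert k (univ.filter fun i : Fin m => (i : ℕ) < k) := by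
  ext i
  simp only [mem_filter, mem_univ, true_and, mem_insert, Fin.ext_iff]
  omega

theorem PrefixSumsLE.exists_lt_of_lt
    (hmaj : PrefixSumsLE y x)
    {k : Fin m} (hk : x k < y k) : ∃ j < k, y j < x j := by
  have h := hmaj (k + 1) k.isLt
  rw [Fin.filter_val_lt_succ, sum_insert (by simp), sum_insert (by simp)] at h
  obtain ⟨j, hj, hjx⟩ := exists_lt_of_sum_lt (show
    ∑ i ∈ univ.filter (fun i : Fin m => (i : ℕ) < k), y i <
      ∑ i ∈ univ.filter (fun i : Fin m => (i : ℕ) < k), x i by linarith)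
  exact ⟨j, Fin.lt_def.mpr (mem_filter.mp hj).2, hjx⟩

theorem PrefixSumsLE.transfer
    (hmaj : PrefixSumsLE y x)
    {j k : Fin m} (hjk : j < k) (hle : ∀ i < k, y i ≤ x i) {δ : ℝ} (hδ : δ ≤ x j - y j) :
    PrefixSumsLE y (transfer x j k δ) := by
  intro l hl
  by_cases hkl : (k : ℕ) < l
  · have hjl : (j : ℕ) < l := lt_trans hjk hkl
    rw [sum_transfer]
    simpa [hkl, hjl] using hmaj l hl
  -- below `k` the transfer keeps every coordinate above `y`
  refine sum_le_sum fun i hi => ?_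
  have hik : i < k := Fin.lt_def.mpr (by have := (mem_filter.mp hi).2; omega)
  by_cases hij : i = j
  · subst hij; simp [hik.ne]; linarith
  · simp [hij, hik.ne, hle i hik]

theorem exists_transfer_step (hconv : Convex ℝ C)
    (hsym : ∀ a ∈ C, ∀ σ : Equiv.Perm (Fin m), a ∘ σ ∈ C) (hx : x ∈ C) (hy : Antitone y)
    (hmaj : PrefixSumsLE y x)
    (hdef : ∃ i, x i < y i) :
    ∃ x' ∈ C, PrefixSumsLE y x' ∧ ∑ i, x' i = ∑ i, x i ∧ #{i | x' i ≠ y i} < #{i | x i ≠ y i} := by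
  obtain ⟨k, hk, hkmin⟩ := exists_min_image {i | x i < y i} id
    (by simpa [Finset.Nonempty] using hdef)
  replace hk : x k < y k := by simpa using hk
  have hle : ∀ i < k, y i ≤ x i := fun i hi =>
    not_lt.mp fun h => hi.not_ge (hkmin i (by simpa using h))
  obtain ⟨j, hjk, hj⟩ := hmaj.exists_lt_of_lt hk
  set δ := min (x j - y j) (y k - x k)
  have hδj : δ ≤ x j - y j := min_le_left _ _
  have hδk : δ ≤ y k - x k := min_le_right _ _
  refine ⟨transfer x j k δ,
    hconv.transfer_mem hsym hx (le_min (by linarith) (by linarith)) (by linarith [hy hjk.le]),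
    hmaj.transfer hjk hle hδj, by rw [sum_transfer]; simp,
    card_filter_ne_lt hj.ne' hk.ne (fun i hij hik => by simp [hij, hik]) ?_⟩
  rcases min_choice (x j - y j) (y k - x k) with h | h
  · left; simp [hjk.ne, δ, h]
  · right; simp [hjk.ne', δ, h]

theorem exists_mem_ge_of_prefixSumsLE (hconv : Convex ℝ C)
    (hsym : ∀ a ∈ C, ∀ σ : Equiv.Perm (Fin m), a ∘ σ ∈ C) (hx : x ∈ C) (hy : Antitone y)
    (hmaj : PrefixSumsLE y x) :
    ∃ z ∈ C, y ≤ z ∧ ∑ i, z i = ∑ i, x i := by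
  induction hn : #{i | x i ≠ y i} using Nat.strong_induction_on generalizing x with
  | _ n ih =>
  by_cases hdef : ∃ i, x i < y i
  · obtain ⟨x', hx'C, hmaj', hsum, hcard⟩ := exists_transfer_step hconv hsym hx hy hmaj hdef
    obtain ⟨z, hzC, hyz, hzsum⟩ := ih _ (hn ▸ hcard) hx'C hmaj' rfl
    exact ⟨z, hzC, hyz, hzsum.trans hsum⟩
  · exact ⟨x, hx, fun i => not_lt.mp (not_exists.mp hdef i), rfl⟩

end Majorization

section Nbar

variable {m : ℕ} {a : Fin m → ℝ} {i₀ : Fin m}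

theorem lt_one_of_mem_Nbar (ha : a ∈ Nbar m) (h₀ : 1 < a i₀) {i : Fin m} (hi : i ≠ i₀) :
    a i < 1 := by
  nlinarith [ha.1 i, ha.2.1 i₀ i hi.symm]

theorem ne_one_of_mem_Nbar (ha : a ∈ Nbar m) (h₀ : 1 < a i₀) (i : Fin m) : a i ≠ 1 := by
  by_cases hi : i = i₀
  · exact hi ▸ h₀.ne'
  · exact (lt_one_of_mem_Nbar ha h₀ hi).ne

theorem oddsSum_nonpos_of_mem_Nbar (ha : a ∈ Nbar m) (h₀ : 1 < a i₀) : oddsSum a ≤ 0 := by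
  have h : 0 ≤ atMostOnePoly a := ha.2.2
  rw [atMostOnePoly_eq_prod_mul_oddsSum (ne_one_of_mem_Nbar ha h₀)] at h
  exact nonpos_of_mul_nonneg_right h (prod_one_sub_neg h₀ fun i => lt_one_of_mem_Nbar ha h₀)

theorem oddsSum_eq_zero_of_boundary (ha : a ∈ Nbar m) (h₀ : 1 < a i₀)
    (hbdry : (∃ i j, i ≠ j ∧ a i * a j = 1) ∨ atMostOnePoly a = 0) : oddsSum a = 0 := by
  have hlt := fun i (hi : i ≠ i₀) => lt_one_of_mem_Nbar ha h₀ hi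
  refine (oddsSum_nonpos_of_mem_Nbar ha h₀).antisymm ?_
  rcases hbdry with ⟨i, j, hij, hmul⟩ | hzero
  · -- a product equal to `1` must involve the coordinate `i₀`
    by_cases hj : j = i₀
    · subst hj
      exact oddsSum_nonneg_of_mul_eq_one ha.1 hij hmul hlt
    by_cases hi : i = i₀
    · subst hi
      exact oddsSum_nonneg_of_mul_eq_one ha.1 hij.symm (by rwa [mul_comm]) hlt
    · nlinarith [ha.1 i, ha.1 j, hlt i hi, hlt j hj]
  · rw [atMostOnePoly_eq_prod_mul_oddsSum (ne_one_of_mem_Nbar ha h₀)] at hzero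
    exact ((mul_eq_zero.mp hzero).resolve_left (prod_one_sub_neg h₀ hlt).ne).ge

end Nbar

theorem boundary_weakMaj_sum_eq {m : ℕ} (hm : 2 ≤ m) (C : Set (Fin m → ℝ))
    (hconv : Convex ℝ C)
    (hsym : ∀ a ∈ C, ∀ σ : Equiv.Perm (Fin m), a ∘ σ ∈ C)
    (hCN : C ⊆ Nbar m)
    (x : Fin m → ℝ) (hx : x ∈ C)
    (y : Fin m → ℝ) (hysort : Antitone y)
    (hmaj : ∀ k : ℕ, k ≤ m →
      ∑ i ∈ univ.filter (fun i : Fin m => (i : ℕ) < k), y i ≤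
        ∑ i ∈ univ.filter (fun i : Fin m => (i : ℕ) < k), x i)
    (hyN : y ∈ Nbar m)
    (hbdry : (∃ i j, i ≠ j ∧ y i * y j = 1) ∨
      ∏ i, (1 - y i) + ∑ i, y i * ∏ j ∈ univ.erase i, (1 - y j) = 0)
    (hy1 : 1 < y ⟨0, by omega⟩) :
    ∑ i, y i = ∑ i, x i := by
  have hsum_le : ∑ i, y i ≤ ∑ i, x i := by simpa using hmaj m le_rfl
  refine hsum_le.antisymm (not_lt.mp fun hlt => ?_)
  obtain ⟨z, hzC, hyz, hzx⟩ := exists_mem_ge_of_prefixSumsLE hconv hsym hx hysort hmaj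
  have hzN := hCN hzC
  have hyz_lt : y < z := lt_of_le_of_ne hyz (by rintro rfl; linarith)
  have hside : ∀ i, z i < 1 ∨ 1 < y i := fun i => by
    by_cases hi : i = ⟨0, by omega⟩
    · exact Or.inr (hi ▸ hy1)
    · exact Or.inl (lt_one_of_mem_Nbar hzN (hy1.trans_le (hyz _)) hi)
  have hy0 := oddsSum_eq_zero_of_boundary hyN hy1 hbdry
  have hz0 := oddsSum_nonpos_of_mem_Nbar hzN (hy1.trans_le (hyz _))
  linarith [oddsSum_lt_oddsSum hyz_lt hside]
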